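/- arXiv:1105.3788 — 5 statements merged into one kernel-verified Lean document; each statement's English description precedes it below -/
import Mathlib

section
/- Let ψ : P → P̂ be a surjective class-compatible map satisfying the dominance condition for ρ and μ, and let K ⊆ Y^ℕ × U^ℕ be a controller. If every (r̂,v̂) in the closed loop (P̂,K) satisfies the (ρ,μ)-gain objective, then every (r,v) in the closed loop (P,K) satisfies the (ρ,μ)-gain objective. -/
/-- The restriction `P|_{u,y}`: feasible signals of `P` whose control input
component equals `u` and whose sensor output component equals `y`. -/
def restrict {U R Y V : Type*} (P : Set ((ℕ → U × R) × (ℕ → Y × V)))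
    (u : ℕ → U) (y : ℕ → Y) : Set ((ℕ → U × R) × (ℕ → Y × V)) :=
  {p | p ∈ P ∧ (∀ t, (p.1 t).1 = u t) ∧ (∀ t, (p.2 t).1 = y t)}

/-- The `(ρ,μ)`-gain objective: the set of partial sums
`Σ_{t=0}^{T} (ρ(r(t)) − μ(v(t)))` is bounded below. -/
def GainObj {R V : Type*} (ρ : R → ℝ) (μ : V → ℝ) (r : ℕ → R) (v : ℕ → V) : Prop :=
  BddBelow (Set.range fun T : ℕ => ∑ t ∈ Finset.range (T + 1), (ρ (r t) - μ (v t)))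

/-- The closed loop `(P,K)`: exogenous-input/performance-output pairs of
feasible signals of `P` whose sensor-output/control-input pair lies in `K`. -/
def closedLoop {U R Y V : Type*} (P : Set ((ℕ → U × R) × (ℕ → Y × V)))
    (K : Set ((ℕ → Y) × (ℕ → U))) : Set ((ℕ → R) × (ℕ → V)) :=
  {rv | ∃ p ∈ P, ((fun t => (p.2 t).1), (fun t => (p.1 t).1)) ∈ K ∧
        rv = ((fun t => (p.1 t).2), (fun t => (p.2 t).2))}

/-- If `ψ : P → P̂` is a surjective class-compatible map satisfying the
dominance condition for `ρ` and `μ`, and every element of the closed loop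
`(P̂,K)` satisfies the `(ρ,μ)`-gain objective, then so does every element of
the closed loop `(P,K)`. -/
theorem closedLoop_gain_transfer {U R Y V : Type*}
    [Nonempty U] [Nonempty R] [Nonempty Y] [Nonempty V]
    (P Phat : Set ((ℕ → U × R) × (ℕ → Y × V)))
    (ψ : P → Phat) (hsurj : Function.Surjective ψ)
    (hcompat : ∀ (u : ℕ → U) (y : ℕ → Y),
      (fun p : P => ((ψ p : (ℕ → U × R) × (ℕ → Y × V)))) ''
        {p : P | (p : (ℕ → U × R) × (ℕ → Y × V)) ∈ restrict P u y}
        ⊆ restrict Phat u y)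
    (ρ : R → ℝ) (μ : V → ℝ)
    (hdom : ∀ p : P, ∀ t : ℕ,
      ρ ((p.val.1 t).2) - μ ((p.val.2 t).2) ≥
      ρ (((ψ p).val.1 t).2) - μ (((ψ p).val.2 t).2))
    (K : Set ((ℕ → Y) × (ℕ → U)))
    (hPhat : ∀ rv ∈ closedLoop Phat K, GainObj ρ μ rv.1 rv.2) :
    ∀ rv ∈ closedLoop P K, GainObj ρ μ rv.1 rv.2 := by
  rintro rv ⟨p, hpP, hK, rfl⟩
  set u : ℕ → U := fun t => (p.1 t).1
  set y : ℕ → Y := fun t => (p.2 t).1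
  have hmem : (ψ ⟨p, hpP⟩ : (ℕ → U × R) × (ℕ → Y × V)) ∈ restrict Phat u y := by
    apply hcompat u y
    exact ⟨⟨p, hpP⟩, ⟨hpP, fun t => rfl, fun t => rfl⟩, rfl⟩
  obtain ⟨hq, hqu, hqy⟩ := hmem
  set q := (ψ ⟨p, hpP⟩ : (ℕ → U × R) × (ℕ → Y × V)) with hqdef
  have hhat : ((fun t => (q.1 t).2), (fun t => (q.2 t).2)) ∈ closedLoop Phat K := by
    refine ⟨q, hq, ?_, rfl⟩
    have h1 : (fun t => (q.2 t).1) = y := funext hqy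
    have h2 : (fun t => (q.1 t).1) = u := funext hqu
    rw [h1, h2]; exact hK
  obtain ⟨b, hb⟩ := hPhat _ hhat
  refine ⟨b, ?_⟩
  rintro x ⟨T, rfl⟩
  have hble : b ≤ ∑ t ∈ Finset.range (T + 1), (ρ ((q.1 t).2) - μ ((q.2 t).2)) :=
    hb ⟨T, rfl⟩
  refine hble.trans (Finset.sum_le_sum fun t _ => ?_)
  exact hdom ⟨p, hpP⟩ t
end

section
/- (Small Gain Theorem.) Let R̂, V̂ be nonempty alphabets and W, Z be nonempty finite alphabets, and let S ⊆ ((R̂ × W)^ℕ) × ((V̂ × Z)^ℕ) and Δ ⊆ Z^ℕ × W^ℕ be systems. Suppose there exist functions ρ_S : R̂ × W → ℝ and μ_S : V̂ × Z → ℝ such that every ((r̂,w),(v̂,z)) ∈ S has {Σ_{t=0}^{T} (ρ_S(r̂(t),w(t)) − μ_S(v̂(t),z(t))) : T ∈ ℕ} bounded below, and there exist a scalar γ_Δ ∈ ℝ and functions ρ_Δ : Z → ℝ, μ_Δ : W → ℝ such that every (z,w) ∈ Δ has {Σ_{t=0}^{T} (γ_Δ ρ_Δ(z(t)) − μ_Δ(w(t)))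 : T ∈ ℕ} bounded below. Then for any τ > 0, defining ρ(r̂) = max_{w ∈ W} (ρ_S(r̂,w) − τ μ_Δ(w)) and μ(v̂) = min_{z ∈ Z} (μ_S(v̂,z) − τ γ_Δ ρ_Δ(z)), every (r̂,v̂) in the feedback interconnection (S,Δ) satisfies the (ρ,μ)-gain objective, i.e., {Σ_{t=0}^{T} (ρ(r̂(t)) − μ(v̂(t))) : T ∈ ℕ} is bounded below. -/
/-- The feedback interconnection `(S,Δ)` of a system
`S ⊆ ((R̂ × W)^ℕ) × ((V̂ × Z)^ℕ)` and an error system `Δ ⊆ Z^ℕ × W^ℕ`. -/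
def feedback {Rh W Vh Z : Type*} (S : Set ((ℕ → Rh × W) × (ℕ → Vh × Z)))
    (Δ : Set ((ℕ → Z) × (ℕ → W))) : Set ((ℕ → Rh) × (ℕ → Vh)) :=
  {rv | ∃ (w : ℕ → W) (z : ℕ → Z),
    ((fun t => (rv.1 t, w t)), (fun t => (rv.2 t, z t))) ∈ S ∧ (z, w) ∈ Δ}

/-- Small Gain Theorem: if `S` satisfies a `(ρ_S, μ_S)` dissipation condition
and `Δ` satisfies a `(γ_Δ ρ_Δ, μ_Δ)` gain condition, then for any `τ > 0`
the feedback interconnection `(S,Δ)` satisfies the `(ρ,μ)`-gain objective with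
`ρ(r̂) = max_w (ρ_S(r̂,w) − τ μ_Δ(w))` and
`μ(v̂) = min_z (μ_S(v̂,z) − τ γ_Δ ρ_Δ(z))`. -/
theorem small_gain {Rh Vh W Z : Type*}
    [Nonempty Rh] [Nonempty Vh]
    [Fintype W] [Nonempty W] [Fintype Z] [Nonempty Z]
    (S : Set ((ℕ → Rh × W) × (ℕ → Vh × Z)))
    (Δ : Set ((ℕ → Z) × (ℕ → W)))
    (ρS : Rh × W → ℝ) (μS : Vh × Z → ℝ)
    (hS : ∀ p ∈ S, BddBelow (Set.range fun T : ℕ =>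
      ∑ t ∈ Finset.range (T + 1), (ρS (p.1 t) - μS (p.2 t))))
    (γΔ : ℝ) (ρΔ : Z → ℝ) (μΔ : W → ℝ)
    (hΔ : ∀ d ∈ Δ, BddBelow (Set.range fun T : ℕ =>
      ∑ t ∈ Finset.range (T + 1), (γΔ * ρΔ (d.1 t) - μΔ (d.2 t))))
    (τ : ℝ) (hτ : 0 < τ) :
    ∀ rv ∈ feedback S Δ,
      BddBelow (Set.range fun T : ℕ =>
        ∑ t ∈ Finset.range (T + 1),
          ((Finset.univ.sup' Finset.univ_nonempty
              fun w : W => ρS (rv.1 t, w) - τ * μΔ w) -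
           (Finset.univ.inf' Finset.univ_nonempty
              fun z : Z => μS (rv.2 t, z) - τ * (γΔ * ρΔ z)))) := by
  rintro rv ⟨w, z, hSm, hΔm⟩
  obtain ⟨b1, hb1⟩ := hS _ hSm
  obtain ⟨b2, hb2⟩ := hΔ _ hΔm
  refine ⟨b1 + τ * b2, ?_⟩
  rintro x ⟨T, rfl⟩
  have key : ∀ t : ℕ,
      (ρS (rv.1 t, w t) - μS (rv.2 t, z t))
        + τ * (γΔ * ρΔ (z t) - μΔ (w t)) ≤
      (Finset.univ.sup' Finset.univ_nonempty
          fun w' : W => ρS (rv.1 t, w') - τ * μΔ w') -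
        (Finset.univ.inf' Finset.univ_nonempty
          fun z' : Z => μS (rv.2 t, z') - τ * (γΔ * ρΔ z')) := by
    intro t
    have h1 : ρS (rv.1 t, w t) - τ * μΔ (w t) ≤
        Finset.univ.sup' Finset.univ_nonempty
          fun w' : W => ρS (rv.1 t, w') - τ * μΔ w' :=
      Finset.le_sup' (fun w' : W => ρS (rv.1 t, w') - τ * μΔ w') (Finset.mem_univ (w t))
    have h2 : (Finset.univ.inf' Finset.univ_nonempty
          fun z' : Z => μS (rv.2 t, z') - τ * (γΔ * ρΔ z')) ≤
        μS (rv.2 t, z t) - τ * (γΔ * ρΔ (z t)) :=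
      Finset.inf'_le (fun z' : Z => μS (rv.2 t, z') - τ * (γΔ * ρΔ z')) (Finset.mem_univ (z t))
    ring_nf
    ring_nf at h1 h2
    linarith
  calc b1 + τ * b2
      ≤ (∑ t ∈ Finset.range (T + 1), (ρS (rv.1 t, w t) - μS (rv.2 t, z t)))
        + τ * ∑ t ∈ Finset.range (T + 1), (γΔ * ρΔ (z t) - μΔ (w t)) := by
        have hA := hb1 ⟨T, rfl⟩
        have hB := hb2 ⟨T, rfl⟩
        simp only at hA hB
        nlinarith
    _ = ∑ t ∈ Finset.range (T + 1),
        ((ρS (rv.1 t, w t) - μS (rv.2 t, z t))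
          + τ * (γΔ * ρΔ (z t) - μΔ (w t))) := by
        rw [Finset.sum_add_distrib, Finset.mul_sum]
    _ ≤ _ := Finset.sum_le_sum fun t _ => key t
end

section
/- Let M̂ ⊆ ((U × R × W)^ℕ) × ((Y × V × Z)^ℕ), Δ ⊆ Z^ℕ × W^ℕ be systems and K ⊆ Y^ℕ × U^ℕ a controller, and let ρ : R → ℝ, μ : V → ℝ, ρ_Δ : Z → ℝ, μ_Δ : W → ℝ and γ ∈ ℝ be given. Suppose that every (z,w) ∈ Δ has {Σ_{t=0}^{T} (γ ρ_Δ(z(t)) − μ_Δ(w(t))) : T ∈ ℕ} bounded below, and that there exists τ > 0 such that every ((r̂,w),(v̂,z)) in the interconnection (M̂,K) has {Σ_{t=0}^{T} (ρ(r̂(t)) + τ μ_Δ(w(t)) − μ(v̂(t)) − τ γ ρ_Δ(z(t))) : T ∈ ℕ} bounded below. Then every (r̂,v̂) in the full closed loop CL(M̂,K,Δ) satisfies the (ρ,μ)-gain objective, i.e., {Σ_{t=0}^{T} (ρ(r̂(t)) − μ(v̂(t))) : T ∈ ℕ} is bounded below. -/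
/-- The interconnection `(M̂,K)` of a nominal model
`M̂ ⊆ ((U × R × W)^ℕ) × ((Y × V × Z)^ℕ)` with a controller `K ⊆ Y^ℕ × U^ℕ`:
the quadruples `(r̂, w, v̂, z)` feasible for `M̂` under some `(y,u) ∈ K`. -/
def interconn {U R W Y V Z : Type*}
    (Mhat : Set ((ℕ → U × R × W) × (ℕ → Y × V × Z)))
    (K : Set ((ℕ → Y) × (ℕ → U))) :
    Set ((ℕ → R) × (ℕ → W) × (ℕ → V) × (ℕ → Z)) :=
  {x | ∃ (u : ℕ → U) (y : ℕ → Y),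
    ((fun t => (u t, x.1 t, x.2.1 t)), (fun t => (y t, x.2.2.1 t, x.2.2.2 t))) ∈ Mhat ∧
    (y, u) ∈ K}

/-- The full closed loop `CL(M̂,K,Δ)`: exogenous-input/performance-output pairs
feasible for the interconnection of `M̂`, `K` and `Δ`. -/
def fullCL {U R W Y V Z : Type*}
    (Mhat : Set ((ℕ → U × R × W) × (ℕ → Y × V × Z)))
    (K : Set ((ℕ → Y) × (ℕ → U)))
    (Δ : Set ((ℕ → Z) × (ℕ → W))) : Set ((ℕ → R) × (ℕ → V)) :=
  {rv | ∃ (u : ℕ → U) (y : ℕ → Y) (w : ℕ → W) (z : ℕ → Z),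
    ((fun t => (u t, rv.1 t, w t)), (fun t => (y t, rv.2 t, z t))) ∈ Mhat ∧
    (y, u) ∈ K ∧ (z, w) ∈ Δ}

/-- If `Δ` satisfies a `(γ ρ_Δ, μ_Δ)` gain condition and for some `τ > 0` the
interconnection `(M̂,K)` satisfies the corresponding combined dissipation
condition, then every element of the full closed loop `CL(M̂,K,Δ)` satisfies
the `(ρ,μ)`-gain objective. -/
theorem synthesis_via_small_gain {U R W Y V Z : Type*}
    [Nonempty U] [Nonempty R] [Nonempty W] [Nonempty Y] [Nonempty V] [Nonempty Z]
    (Mhat : Set ((ℕ → U × R × W) × (ℕ → Y × V × Z)))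
    (Δ : Set ((ℕ → Z) × (ℕ → W)))
    (K : Set ((ℕ → Y) × (ℕ → U)))
    (ρ : R → ℝ) (μ : V → ℝ) (ρΔ : Z → ℝ) (μΔ : W → ℝ) (γ : ℝ)
    (hΔ : ∀ d ∈ Δ, BddBelow (Set.range fun T : ℕ =>
      ∑ t ∈ Finset.range (T + 1), (γ * ρΔ (d.1 t) - μΔ (d.2 t))))
    (hMK : ∃ τ : ℝ, 0 < τ ∧ ∀ x ∈ interconn Mhat K,
      BddBelow (Set.range fun T : ℕ =>
        ∑ t ∈ Finset.range (T + 1),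
          (ρ (x.1 t) + τ * μΔ (x.2.1 t) - μ (x.2.2.1 t) - τ * (γ * ρΔ (x.2.2.2 t))))) :
    ∀ rv ∈ fullCL Mhat K Δ,
      BddBelow (Set.range fun T : ℕ =>
        ∑ t ∈ Finset.range (T + 1), (ρ (rv.1 t) - μ (rv.2 t))) := by
  obtain ⟨τ, hτ, hMK⟩ := hMK
  rintro ⟨r, v⟩ ⟨u, y, w, z, hM, hK, hzw⟩
  obtain ⟨b1, hb1⟩ := hMK (r, w, v, z) ⟨u, y, hM, hK⟩
  obtain ⟨b2, hb2⟩ := hΔ (z, w) hzw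
  refine ⟨b1 + τ * b2, ?_⟩
  rintro x ⟨T, rfl⟩
  have h1 := hb1 ⟨T, rfl⟩
  have h2 := hb2 ⟨T, rfl⟩
  have key : ∑ t ∈ Finset.range (T + 1), (ρ (r t) - μ (v t)) =
      (∑ t ∈ Finset.range (T + 1),
        (ρ (r t) + τ * μΔ (w t) - μ (v t) - τ * (γ * ρΔ (z t)))) +
      τ * ∑ t ∈ Finset.range (T + 1), (γ * ρΔ (z t) - μΔ (w t)) := by
    rw [Finset.mul_sum, ← Finset.sum_add_distrib]
    apply Finset.sum_congr rfl
    intro t _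
    ring
  simp only at key h1 h2 ⊢
  rw [key]
  have := mul_le_mul_of_nonneg_left h2 hτ.le
  linarith
end

section
/- Let M̂ ⊆ ((U × R × W)^ℕ) × ((Y × V × Z)^ℕ), Δ ⊆ Z^ℕ × W^ℕ be systems and K ⊆ Y^ℕ × U^ℕ a controller; let ρ : R → ℝ, μ : V → ℝ, μ_Δ : W → ℝ be functions, ρ_Δ : Z → ℝ a nonnegative function, and γ, γ̃ ∈ ℝ with γ̃ ≥ γ. Suppose every (z,w) ∈ Δ has {Σ_{t=0}^{T} (γ ρ_Δ(z(t)) − μ_Δ(w(t))) : T ∈ ℕ} bounded below, and there exists τ > 0 such that every ((r̂,w),(v̂,z)) in the interconnection (M̂,K) has {Σ_{t=0}^{T} (ρ(r̂(t)) + τ μ_Δ(w(t)) − μ(v̂(t)) − τ γ̃ ρ_Δ(z(t))) : T ∈ ℕ} bounded below. Then every (r̂,v̂) in the full closed loop CL(M̂,K,Δ) satisfies the (ρ,μ)-gain objective, i.e., {Σ_{t=0}^{T} (ρ(r̂(t)) − μ(v̂(t))) : T ∈ ℕ} is bounded below. -/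
/-- Synthesis with a gain bound: if `Δ` satisfies a `(γ ρ_Δ, μ_Δ)` gain
condition with `γ̃ ≥ γ` and `ρ_Δ ≥ 0`, and for some `τ > 0` the interconnection
`(M̂,K)` satisfies the combined dissipation condition with `γ̃` in place of
`γ`, then every element of the full closed loop `CL(M̂,K,Δ)` satisfies the
`(ρ,μ)`-gain objective. -/
theorem synthesis_with_gain_bound {U R W Y V Z : Type*}
    [Nonempty U] [Nonempty R] [Nonempty W] [Nonempty Y] [Nonempty V] [Nonempty Z]
    (Mhat : Set ((ℕ → U × R × W) × (ℕ → Y × V × Z)))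
    (Δ : Set ((ℕ → Z) × (ℕ → W)))
    (K : Set ((ℕ → Y) × (ℕ → U)))
    (ρ : R → ℝ) (μ : V → ℝ) (μΔ : W → ℝ) (ρΔ : Z → ℝ)
    (hρΔ : ∀ z, 0 ≤ ρΔ z)
    (γ γt : ℝ) (hγ : γt ≥ γ)
    (hΔ : ∀ d ∈ Δ, BddBelow (Set.range fun T : ℕ =>
      ∑ t ∈ Finset.range (T + 1), (γ * ρΔ (d.1 t) - μΔ (d.2 t))))
    (hMK : ∃ τ : ℝ, 0 < τ ∧ ∀ x ∈ interconn Mhat K,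
      BddBelow (Set.range fun T : ℕ =>
        ∑ t ∈ Finset.range (T + 1),
          (ρ (x.1 t) + τ * μΔ (x.2.1 t) - μ (x.2.2.1 t) - τ * (γt * ρΔ (x.2.2.2 t))))) :
    ∀ rv ∈ fullCL Mhat K Δ,
      BddBelow (Set.range fun T : ℕ =>
        ∑ t ∈ Finset.range (T + 1), (ρ (rv.1 t) - μ (rv.2 t))) := by
  rintro ⟨r, v⟩ ⟨u, y, w, z, hM, hK, hD⟩
  obtain ⟨τ, hτ, hMK'⟩ := hMK
  have h1 := hMK' (r, w, v, z) ⟨u, y, hM, hK⟩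
  have h2 := hΔ (z, w) hD
  obtain ⟨B1, hB1⟩ := h1
  obtain ⟨B2, hB2⟩ := h2
  refine ⟨B1 + τ * B2, ?_⟩
  rintro x ⟨T, rfl⟩
  have e1 : B1 ≤ ∑ t ∈ Finset.range (T + 1),
      (ρ (r t) + τ * μΔ (w t) - μ (v t) - τ * (γt * ρΔ (z t))) :=
    hB1 ⟨T, rfl⟩
  have e2 : B2 ≤ ∑ t ∈ Finset.range (T + 1), (γ * ρΔ (z t) - μΔ (w t)) :=
    hB2 ⟨T, rfl⟩
  have e3 : ∀ t, ρ (r t) + τ * μΔ (w t) - μ (v t) - τ * (γt * ρΔ (z t))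
      + τ * (γ * ρΔ (z t) - μΔ (w t)) ≤ ρ (r t) - μ (v t) := by
    intro t
    have : τ * (γ * ρΔ (z t)) ≤ τ * (γt * ρΔ (z t)) := by
      apply mul_le_mul_of_nonneg_left _ hτ.le
      exact mul_le_mul_of_nonneg_right hγ (hρΔ _)
    nlinarith
  calc B1 + τ * B2
      ≤ (∑ t ∈ Finset.range (T + 1),
          (ρ (r t) + τ * μΔ (w t) - μ (v t) - τ * (γt * ρΔ (z t))))
        + τ * ∑ t ∈ Finset.range (T + 1), (γ * ρΔ (z t) - μΔ (w t)) := by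
        gcongr
    _ = ∑ t ∈ Finset.range (T + 1),
          (ρ (r t) + τ * μΔ (w t) - μ (v t) - τ * (γt * ρΔ (z t))
            + τ * (γ * ρΔ (z t) - μΔ (w t))) := by
        rw [Finset.mul_sum, ← Finset.sum_add_distrib]
    _ ≤ ∑ t ∈ Finset.range (T + 1), (ρ (r t) - μ (v t)) :=
        Finset.sum_le_sum fun t _ => e3 t
end

section
/- Let ψ : P → P̂ be a surjective class-compatible map satisfying the dominance condition for ρ and μ, and suppose additionally that there exists T* ∈ ℕ such that for every p = ((u,r),(y,v)) ∈ P, writing ψ(p) = ((u,r̂),(y,v̂)), one has ρ(r(t)) − μ(v(t)) = ρ(r̂(t)) − μ(v̂(t)) for all t ≥ T*. Then for every controller K ⊆ Y^ℕ × U^ℕ: every (r̂,v̂) in the closed loop (P̂,K) satisfies the (ρ,μ)-gain objective if and only if every (r,v) in the closed loop (P,K) satisfies the (ρ,μ)-gain objective. -/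
lemma sum_le_transient {δ : ℕ → ℝ} (hnn : ∀ t, 0 ≤ δ t) (Tstar : ℕ)
    (hz : ∀ t, Tstar ≤ t → δ t = 0) :
    ∀ T, ∑ t ∈ Finset.range T, δ t ≤ ∑ t ∈ Finset.range Tstar, δ t := by
  intro T
  induction T with
  | zero => simpa using Finset.sum_nonneg fun t _ => hnn t
  | succ T ih =>
    rcases le_or_gt Tstar T with h | h
    · rw [Finset.sum_range_succ, hz T h, add_zero]; exact ih
    · exact Finset.sum_le_sum_of_subset_of_nonneg
        (Finset.range_subset_range.2 h) (fun t _ _ => hnn t)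

/-- If `ψ : P → P̂` is a surjective class-compatible map satisfying the
dominance condition for `ρ` and `μ`, and moreover the per-step costs of `p`
and `ψ(p)` coincide for all times `t ≥ T*` for some finite `T*`, then for any
controller `K` the closed loop `(P̂,K)` satisfies the `(ρ,μ)`-gain objective
if and only if the closed loop `(P,K)` does. -/
theorem exact_after_transient_iff {U R Y V : Type*}
    [Nonempty U] [Nonempty R] [Nonempty Y] [Nonempty V]
    (P Phat : Set ((ℕ → U × R) × (ℕ → Y × V)))
    (ψ : P → Phat) (hsurj : Function.Surjective ψ)
    (hcompat : ∀ (u : ℕ → U) (y : ℕ → Y),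
      (fun p : P => ((ψ p : (ℕ → U × R) × (ℕ → Y × V)))) ''
        {p : P | (p : (ℕ → U × R) × (ℕ → Y × V)) ∈ restrict P u y}
        ⊆ restrict Phat u y)
    (ρ : R → ℝ) (μ : V → ℝ)
    (hdom : ∀ p : P, ∀ t : ℕ,
      ρ ((p.val.1 t).2) - μ ((p.val.2 t).2) ≥
      ρ (((ψ p).val.1 t).2) - μ (((ψ p).val.2 t).2))
    (hexact : ∃ Tstar : ℕ, ∀ p : P, ∀ t : ℕ, Tstar ≤ t →
      ρ ((p.val.1 t).2) - μ ((p.val.2 t).2) =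
      ρ (((ψ p).val.1 t).2) - μ (((ψ p).val.2 t).2)) :
    ∀ K : Set ((ℕ → Y) × (ℕ → U)),
      ((∀ rv ∈ closedLoop Phat K, GainObj ρ μ rv.1 rv.2) ↔
       (∀ rv ∈ closedLoop P K, GainObj ρ μ rv.1 rv.2)) := by
  
  obtain ⟨Tstar, hex⟩ := hexact
  intro K
  have key : ∀ p : P, (∀ t, (((ψ p).val.1 t).1) = ((p.val.1 t).1)) ∧
      (∀ t, (((ψ p).val.2 t).1) = ((p.val.2 t).1)) := by
    intro p
    have h := hcompat (fun t => (p.val.1 t).1) (fun t => (p.val.2 t).1)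
      (Set.mem_image_of_mem _ (show p ∈ _ from ⟨p.property, fun _ => rfl, fun _ => rfl⟩))
    exact ⟨h.2.1, h.2.2⟩
  have keyK : ∀ p : P, ∀ K : Set ((ℕ → Y) × (ℕ → U)),
      (((fun t => ((ψ p).val.2 t).1), (fun t => ((ψ p).val.1 t).1)) ∈ K ↔
       ((fun t => (p.val.2 t).1), (fun t => (p.val.1 t).1)) ∈ K) := by
    intro p K
    have h1 : (fun t => ((ψ p).val.2 t).1) = fun t => (p.val.2 t).1 :=
      funext fun t => (key p).2 t
    have h2 : (fun t => ((ψ p).val.1 t).1) = fun t => (p.val.1 t).1 :=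
      funext fun t => (key p).1 t
    rw [h1, h2]
  constructor
  · -- P̂ closed loop satisfies ⇒ P closed loop satisfies
    rintro hPhat rv ⟨p, hpP, hK, rfl⟩
    set q : P := ⟨p, hpP⟩ with hqdef
    have hq_cl : ((fun t => ((ψ q).val.1 t).2), (fun t => ((ψ q).val.2 t).2)) ∈
        closedLoop Phat K :=
      ⟨(ψ q).val, (ψ q).property, (keyK q K).2 hK, rfl⟩
    obtain ⟨m, hm⟩ := hPhat _ hq_cl
    refine ⟨m, ?_⟩
    rintro x ⟨T, rfl⟩
    have := hm (Set.mem_range_self T)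
    refine le_trans this (Finset.sum_le_sum fun t _ => ?_)
    exact hdom q t
  · -- P closed loop satisfies ⇒ P̂ closed loop satisfies
    rintro hP rv ⟨phat, hphatP, hK, rfl⟩
    obtain ⟨p, hp⟩ := hsurj ⟨phat, hphatP⟩
    have hK' : ((fun t => (p.val.2 t).1), (fun t => (p.val.1 t).1)) ∈ K := by
      have := (keyK p K).1
      rw [hp] at this
      exact this hK
    have hp_cl : ((fun t => (p.val.1 t).2), (fun t => (p.val.2 t).2)) ∈
        closedLoop P K := ⟨p.val, p.property, hK', rfl⟩
    obtain ⟨m, hm⟩ := hP _ hp_cl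
    set δ : ℕ → ℝ := fun t =>
      (ρ ((p.val.1 t).2) - μ ((p.val.2 t).2)) -
      (ρ (((ψ p).val.1 t).2) - μ (((ψ p).val.2 t).2)) with hδ
    have hnn : ∀ t, 0 ≤ δ t := fun t => sub_nonneg.2 (hdom p t)
    have hz : ∀ t, Tstar ≤ t → δ t = 0 := fun t ht => sub_eq_zero.2 (hex p t ht)
    refine ⟨m - ∑ t ∈ Finset.range Tstar, δ t, ?_⟩
    rintro x ⟨T, rfl⟩
    have hmT := hm (Set.mem_range_self T)
    beta_reduce at hmT ⊢
    have hsplit : ∑ t ∈ Finset.range (T + 1),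
        (ρ ((phat.1 t).2) - μ ((phat.2 t).2)) =
        ∑ t ∈ Finset.range (T + 1), (ρ ((p.val.1 t).2) - μ ((p.val.2 t).2)) -
        ∑ t ∈ Finset.range (T + 1), δ t := by
      rw [← Finset.sum_sub_distrib]
      refine Finset.sum_congr rfl fun t _ => ?_
      have : ((ψ p).val : (ℕ → U × R) × (ℕ → Y × V)) = phat := by rw [hp]
      rw [hδ]
      simp only [this]
      ring
    rw [hsplit]
    have h1 : ∑ t ∈ Finset.range (T + 1), δ t ≤ ∑ t ∈ Finset.range Tstar, δ t :=
      sum_le_transient hnn Tstar hz (T + 1)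
    have h2 : m ≤ ∑ t ∈ Finset.range (T + 1), (ρ ((p.val.1 t).2) - μ ((p.val.2 t).2)) := hmT
    linarith
end
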